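/- Let θ be a ternary relation on ℕ and k, n ∈ ℕ. Every ω^{n+k}·2-large*(θ) finite set X ⊆ ℕ contains an ω^k-sparse ω^n-large*(θ) subset. -/

import Mathlib

/-!
Induct on `k`, reading `ω^{n+k+1}` as `ω^{(n+1)+k}`: by induction an `ω^{n+k+1}`-large* set
contains an `ω^k`-sparse `ω^{n+1}`-large* set `Z`, and it remains to thin `Z` to an
`ω^n`-large* set `Y` such that for `x < y` in `Y` the interval `(x, y]` contains `x + 2`
elements of `Z`; these cut `(x, y]` into `x + 1` consecutive `ω^k`-large intervals, so `(x, y]`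
is `ω^{k+1}`-large.

The thinning recurses on `n`. `Z ∖ {min Z}` is a tree of depth `n + 1` and arity
`c = min Z ≥ 2` of `θ`-apart blocks with `ω^n`-large* leaves. Each bottom family of `c` leaves
is replaced by its second leaf, thinned recursively; this leaves a tree of depth `n`, so adding
back `min Z` gives an `ω^n`-large* set. The first leaf of the family contains an `ω`-large* set
`B`, which has more than `min B` elements, all lying between any lower bound of the family and
the thinned leaf: this provides the `x + 2` elements between points of different leaves and
above `min Z`.
-/

/-- The minimum of a finite set of naturals (`0` if empty). -/
noncomputable def minN (X : Finset ℕ) : ℕ := sInf (X : Set ℕ)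

/-- The maximum of a finite set of naturals (`0` if empty). -/
def maxN (X : Finset ℕ) : ℕ := X.sup id

/-- `E` lies entirely below `F`. -/
def SetBelow (E F : Finset ℕ) : Prop := ∀ x ∈ E, ∀ y ∈ F, x < y

/-- `E` and `F` are `θ`-apart: for every `x < max E` there is `y < min F`
with `θ x y z` for all `z < max F`. -/
def ThetaApart (θ : ℕ → ℕ → ℕ → Prop) (E F : Finset ℕ) : Prop :=
  ∀ x < maxN E, ∃ y < minN F, ∀ z < maxN F, θ x y z

/-- `L·k`: finite sets containing `k` pairwise `θ`-apart members `X₀ < ⋯ < X_{k-1}` of `L`. -/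
def MulK (θ : ℕ → ℕ → ℕ → Prop) (L : Set (Finset ℕ)) (k : ℕ) : Set (Finset ℕ) :=
  {F | ∃ X : Fin k → Finset ℕ, (∀ i, X i ∈ L) ∧ (∀ i, X i ⊆ F) ∧
    ∀ i j, i < j → SetBelow (X i) (X j) ∧ ThetaApart θ (X i) (X j)}

/-- `L·σ` for a finite sequence `σ`: `L·ε = L`, `L·(k⌢τ) = (L·k)·τ`. -/
def MulSeq (θ : ℕ → ℕ → ℕ → Prop) (L : Set (Finset ℕ)) : List ℕ → Set (Finset ℕ)
  | [] => L
  | k :: τ => MulSeq θ (MulK θ L k) τ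

/-- `L^θ_n`: the `ω^n`-large*(θ) finite sets. -/
noncomputable def LargeStar (θ : ℕ → ℕ → ℕ → Prop) : ℕ → Set (Finset ℕ)
  | 0 => {X | X.Nonempty}
  | n + 1 => {X | X.Nonempty ∧
      X.erase (minN X) ∈ MulSeq θ (LargeStar θ n) (List.replicate (n + 1) (minN X))}

/-- `ω^n`-largeness(θ) (the non-starred notion). -/
noncomputable def LargeTheta (θ : ℕ → ℕ → ℕ → Prop) : ℕ → Set (Finset ℕ)
  | 0 => {X | X.Nonempty}
  | n + 1 => {X | X.Nonempty ∧ X.erase (minN X) ∈ MulK θ (LargeTheta θ n) (minN X)}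

/-- `L·k` without θ-apartness (plain largeness product). -/
def MulKPlain (L : Set (Finset ℕ)) (k : ℕ) : Set (Finset ℕ) :=
  {F | ∃ X : Fin k → Finset ℕ, (∀ i, X i ∈ L) ∧ (∀ i, X i ⊆ F) ∧
    ∀ i j, i < j → SetBelow (X i) (X j)}

/-- Ketonen–Solovay `ω^n`-largeness (no θ). -/
noncomputable def LargePlain : ℕ → Set (Finset ℕ)
  | 0 => {X | X.Nonempty}
  | n + 1 => {X | X.Nonempty ∧ X.erase (minN X) ∈ MulKPlain (LargePlain n) (minN X)}

/-- `g`-sparsity. -/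
def GSparse (g : ℕ → ℕ) (X : Finset ℕ) : Prop := ∀ x ∈ X, ∀ y ∈ X, x < y → g x < y

/-- exp-sparsity. -/
def ExpSparse (X : Finset ℕ) : Prop := ∀ x ∈ X, ∀ y ∈ X, x < y → 4 ^ x < y

/-- `ω^k`-sparsity. -/
def OmegaSparse (k : ℕ) (X : Finset ℕ) : Prop :=
  ∀ x ∈ X, ∀ y ∈ X, x < y → Finset.Ioc x y ∈ LargePlain k

open Finset

lemma minN_mem {X : Finset ℕ} (h : X.Nonempty) : minN X ∈ X := by
  have : (X : Set ℕ).Nonempty := h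
  exact_mod_cast Nat.sInf_mem this

lemma minN_le {X : Finset ℕ} {x : ℕ} (h : x ∈ X) : minN X ≤ x :=
  Nat.sInf_le (by exact_mod_cast h)

lemma minN_eq_of_forall_le {X : Finset ℕ} {a : ℕ} (ha : a ∈ X) (h : ∀ x ∈ X, a ≤ x) : minN X = a :=
  le_antisymm (minN_le ha) (h _ (minN_mem ⟨a, ha⟩))

lemma maxN_mem {X : Finset ℕ} (h : X.Nonempty) : maxN X ∈ X := by
  obtain ⟨b, hb, he⟩ := exists_mem_eq_sup X h id
  rwa [maxN, he]

lemma maxN_mono {X Y : Finset ℕ} (h : X ⊆ Y) : maxN X ≤ maxN Y :=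
  sup_mono h

lemma SetBelow.mono {E F E' F' : Finset ℕ} (h : SetBelow E F) (hE : E' ⊆ E) (hF : F' ⊆ F) :
    SetBelow E' F' := fun x hx y hy => h x (hE hx) y (hF hy)

lemma ThetaApart.mono {θ : ℕ → ℕ → ℕ → Prop} {E F E' F' : Finset ℕ}
    (h : ThetaApart θ E F) (hE : E' ⊆ E) (hF : F' ⊆ F) (hF' : F'.Nonempty) :
    ThetaApart θ E' F' := by
  intro x hx
  obtain ⟨y, hy, hθ⟩ := h x (hx.trans_le (maxN_mono hE))
  exact ⟨y, hy.trans_le (minN_le (hF (minN_mem hF'))),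
    fun z hz => hθ z (hz.trans_le (maxN_mono hF))⟩

lemma mulK_of_subset_blocks {θ : ℕ → ℕ → ℕ → Prop} {M : Set (Finset ℕ)} {c : ℕ}
    {P V : Fin c → Finset ℕ} {F : Finset ℕ}
    (hP : ∀ i j, i < j → SetBelow (P i) (P j) ∧ ThetaApart θ (P i) (P j))
    (hVP : ∀ i, V i ⊆ P i) (hV : ∀ i, V i ∈ M) (hVne : ∀ i, (V i).Nonempty)
    (hVF : ∀ i, V i ⊆ F) : F ∈ MulK θ M c :=
  ⟨V, hV, hVF, fun i j hij =>
    ⟨(hP i j hij).1.mono (hVP i) (hVP j), (hP i j hij).2.mono (hVP i) (hVP j) (hVne j)⟩⟩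

lemma mulSeq_replicate_succ (θ : ℕ → ℕ → ℕ → Prop) (a d : ℕ) (L : Set (Finset ℕ)) :
    MulSeq θ L (List.replicate (d + 1) a) = MulK θ (MulSeq θ L (List.replicate d a)) a := by
  induction d generalizing L with
  | zero => rfl
  | succ d ih => exact ih (MulK θ L a)

lemma exists_subset_mem_of_mem_mulSeq_replicate {θ : ℕ → ℕ → ℕ → Prop}
    {L : Set (Finset ℕ)} {a : ℕ} (ha : 1 ≤ a) {d : ℕ} {F : Finset ℕ}
    (hF : F ∈ MulSeq θ L (List.replicate d a)) : ∃ A ⊆ F, A ∈ L := by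
  induction d generalizing F with
  | zero => exact ⟨F, subset_rfl, hF⟩
  | succ d ih =>
    rw [mulSeq_replicate_succ] at hF
    obtain ⟨P, hP, hPF, -⟩ := hF
    obtain ⟨A, hAP, hA⟩ := ih (hP ⟨0, ha⟩)
    exact ⟨A, hAP.trans (hPF ⟨0, ha⟩), hA⟩

lemma nonempty_of_mem_largeStar {θ : ℕ → ℕ → ℕ → Prop} {j : ℕ} {A : Finset ℕ}
    (h : A ∈ LargeStar θ j) : A.Nonempty := by
  cases j with
  | zero => exact h
  | succ n => exact h.1

lemma nonempty_of_mem_mulSeq_largeStar {θ : ℕ → ℕ → ℕ → Prop} {j a d : ℕ} (ha : 1 ≤ a)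
    {F : Finset ℕ} (hF : F ∈ MulSeq θ (LargeStar θ j) (List.replicate d a)) : F.Nonempty := by
  obtain ⟨A, hAF, hA⟩ := exists_subset_mem_of_mem_mulSeq_replicate ha hF
  exact (nonempty_of_mem_largeStar hA).mono hAF

lemma exists_subset_mem_largeStar_one {θ : ℕ → ℕ → ℕ → Prop} {j : ℕ} {A : Finset ℕ}
    (hA : A ∈ LargeStar θ (j + 1)) (hpos : ∀ w ∈ A, 1 ≤ w) : ∃ B ⊆ A, B ∈ LargeStar θ 1 := by
  induction j generalizing A with
  | zero => exact ⟨A, subset_rfl, hA⟩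
  | succ j ih =>
    obtain ⟨C, hC, hCmem⟩ :=
      exists_subset_mem_of_mem_mulSeq_replicate (hpos _ (minN_mem hA.1)) hA.2
    have hCA : C ⊆ A := hC.trans (erase_subset _ _)
    obtain ⟨B, hBC, hB⟩ := ih hCmem fun w hw => hpos w (hCA hw)
    exact ⟨B, hBC.trans hCA, hB⟩

/-- An `ω`-large* set `B` contains `min B` blocks above `min B`, with distinct minima. -/
lemma minN_lt_card_of_mem_largeStar_one {θ : ℕ → ℕ → ℕ → Prop} {B : Finset ℕ}
    (hB : B ∈ LargeStar θ 1) : minN B < #B := by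
  obtain ⟨hne, T, hT, hTB, hTbelow⟩ := hB
  have hmono : StrictMono fun i => minN (T i) := fun i j hij =>
    (hTbelow i j hij).1 _ (minN_mem (hT i)) _ (minN_mem (hT j))
  have hcard : minN B ≤ #(B.erase (minN B)) := by
    simpa using card_le_card_of_injOn (s := univ) _
      (fun i _ => hTB i (minN_mem (hT i))) hmono.injective.injOn
  rw [card_erase_of_mem (minN_mem hne)] at hcard
  have := hne.card_pos
  omega

def Crowded (A : Finset ℕ) (x y : ℕ) : Prop := x + 2 ≤ #(A ∩ Ioc x y)

lemma Crowded.mono {A A' : Finset ℕ} {x y y' : ℕ} (h : Crowded A x y) (hA : A ⊆ A')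
    (hy : y ≤ y') : Crowded A' x y' :=
  h.trans (card_le_card (inter_subset_inter hA (Ioc_subset_Ioc_right hy)))

lemma crowded_of_mem_largeStar_one {θ : ℕ → ℕ → ℕ → Prop} {A B : Finset ℕ} {x y : ℕ}
    (hB : B ∈ LargeStar θ 1) (hBA : B ⊆ A) (hxB : ∀ w ∈ B, x < w) (hBy : ∀ w ∈ B, w ≤ y) :
    Crowded A x y := by
  have hsub : B ⊆ A ∩ Ioc x y := fun w hw => mem_inter.2 ⟨hBA hw, mem_Ioc.2 ⟨hxB w hw, hBy w hw⟩⟩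
  have := hxB _ (minN_mem hB.1)
  have := minN_lt_card_of_mem_largeStar_one hB
  exact (by omega : x + 2 ≤ #B).trans (card_le_card hsub)

lemma Ioc_mem_largePlain_succ {k : ℕ} {Z : Finset ℕ} (hZ : OmegaSparse k Z) {x y : ℕ}
    (h : Crowded Z x y) : Ioc x y ∈ LargePlain (k + 1) := by
  obtain ⟨S, hSZ, hS⟩ := exists_subset_card_eq h
  set g := S.orderEmbOfFin hS
  have hg : ∀ i, g i ∈ Z ∧ x < g i ∧ g i ≤ y := fun i => by
    simpa only [mem_inter, mem_Ioc] using hSZ (S.orderEmbOfFin_mem hS i)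
  have hmin : minN (Ioc x y) = x + 1 :=
    minN_eq_of_forall_le (mem_Ioc.2 ⟨x.lt_succ_self, (hg 0).2.1.trans_le (hg 0).2.2⟩)
      fun w hw => (mem_Ioc.1 hw).1
  refine ⟨⟨x + 1, mem_Ioc.2 ⟨x.lt_succ_self, (hg 0).2.1.trans_le (hg 0).2.2⟩⟩, ?_⟩
  rw [hmin]
  refine ⟨fun i => Ioc (g i.castSucc) (g i.succ), fun i => ?_, fun i w hw => ?_,
    fun i j hij u hu v hv => ?_⟩
  · exact hZ _ (hg _).1 _ (hg _).1 (g.strictMono Fin.castSucc_lt_succ)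
  · have h0 : g 0 ≤ g i.castSucc := g.monotone (Fin.zero_le _)
    have := (hg 0).2.1
    have := (hg i.succ).2.2
    rw [mem_Ioc] at hw
    exact mem_erase.2 ⟨by omega, mem_Ioc.2 ⟨by omega, by omega⟩⟩
  · have : g i.succ ≤ g j.castSucc := g.monotone (Fin.succ_le_castSucc_iff.2 hij)
    rw [mem_Ioc] at hu hv
    omega

def SpacedIn (A V : Finset ℕ) : Prop := ∀ x ∈ V, ∀ y ∈ V, x < y → Crowded A x y

def SpacedFromBelow (A V : Finset ℕ) : Prop := ∀ x, (∀ w ∈ A, x < w) → ∀ y ∈ V, Crowded A x y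

lemma SpacedIn.mono {A A' V : Finset ℕ} (h : SpacedIn A V) (hA : A ⊆ A') : SpacedIn A' V :=
  fun x hx y hy hxy => (h x hx y hy hxy).mono hA le_rfl

lemma SpacedIn.insert {A V : Finset ℕ} {c : ℕ} (hV : SpacedIn A V) (hgap : SpacedFromBelow A V)
    (hVA : V ⊆ A) (hc : ∀ w ∈ A, c < w) : SpacedIn A (insert c V) := by
  intro x hx y hy hxy
  rcases mem_insert.1 hx with rfl | hxV
  · rcases mem_insert.1 hy with rfl | hyV
    · exact absurd hxy (lt_irrefl _)
    · exact hgap x hc y hyV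
  · rcases mem_insert.1 hy with rfl | hyV
    · exact absurd (hc x (hVA hxV)) hxy.not_gt
    · exact hV x hxV y hyV hxy

section Blocks

variable {c : ℕ} {P V : Fin c → Finset ℕ} {G : Finset ℕ}

lemma spacedIn_biUnion (hbelow : ∀ i j, i < j → SetBelow (P i) (P j)) (hPG : ∀ i, P i ⊆ G)
    (hVP : ∀ i, V i ⊆ P i) (hsp : ∀ i, SpacedIn (P i) (V i))
    (hgap : ∀ i, SpacedFromBelow (P i) (V i)) : SpacedIn G (univ.biUnion V) := by
  intro x hx y hy hxy
  obtain ⟨i, -, hxi⟩ := mem_biUnion.1 hx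
  obtain ⟨i', -, hyi'⟩ := mem_biUnion.1 hy
  rcases lt_trichotomy i i' with hii' | rfl | hi'i
  · exact (hgap i' x (hbelow i i' hii' x (hVP i hxi)) y hyi').mono (hPG i') le_rfl
  · exact (hsp i x hxi y hyi' hxy).mono (hPG i) le_rfl
  · exact absurd (hbelow i' i hi'i y (hVP i' hyi') x (hVP i hxi)) hxy.not_gt

lemma spacedFromBelow_biUnion (hPG : ∀ i, P i ⊆ G) (hgap : ∀ i, SpacedFromBelow (P i) (V i)) :
    SpacedFromBelow G (univ.biUnion V) := by
  intro x hx y hy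
  obtain ⟨i, -, hyi⟩ := mem_biUnion.1 hy
  exact (hgap i x (fun w hw => hx w (hPG i hw)) y hyi).mono (hPG i) le_rfl

end Blocks

section Thinning

variable {θ : ℕ → ℕ → ℕ → Prop} {j : ℕ}

/-- The bottom level of the tree: the second block is thinned, the first supplies the gap. -/
lemma exists_spaced_subset_of_mem_mulK
    (hthin : ∀ A ∈ LargeStar θ (j + 1), (∀ w ∈ A, 2 ≤ w) →
      ∃ V ⊆ A, V ∈ LargeStar θ j ∧ SpacedIn A V)
    {c : ℕ} (hc : 2 ≤ c) {G : Finset ℕ} (hG2 : ∀ w ∈ G, 2 ≤ w)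
    (hG : G ∈ MulK θ (LargeStar θ (j + 1)) c) :
    ∃ V ⊆ G, V ∈ LargeStar θ j ∧ SpacedFromBelow G V ∧ SpacedIn G V := by
  obtain ⟨P, hP, hPG, hPP⟩ := hG
  let i₀ : Fin c := ⟨0, by omega⟩
  let i₁ : Fin c := ⟨1, by omega⟩
  obtain ⟨B, hBP, hB⟩ :=
    exists_subset_mem_largeStar_one (hP i₀) fun w hw => (hG2 w (hPG i₀ hw)).trans' one_le_two
  obtain ⟨V, hVP, hV, hsp⟩ := hthin _ (hP i₁) fun w hw => hG2 w (hPG i₁ hw)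
  refine ⟨V, hVP.trans (hPG i₁), hV, fun x hx y hy => ?_, hsp.mono (hPG i₁)⟩
  exact crowded_of_mem_largeStar_one hB (hBP.trans (hPG i₀))
    (fun w hw => hx w (hPG i₀ (hBP hw)))
    fun w hw => ((hPP i₀ i₁ (Fin.mk_lt_mk.2 one_pos)).1 w (hBP hw) y (hVP hy)).le

lemma exists_spaced_subset_of_mem_mulSeq
    (hthin : ∀ A ∈ LargeStar θ (j + 1), (∀ w ∈ A, 2 ≤ w) →
      ∃ V ⊆ A, V ∈ LargeStar θ j ∧ SpacedIn A V)
    {c : ℕ} (hc : 2 ≤ c) (d : ℕ) {G : Finset ℕ} (hG2 : ∀ w ∈ G, 2 ≤ w)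
    (hG : G ∈ MulSeq θ (LargeStar θ (j + 1)) (List.replicate (d + 1) c)) :
    ∃ V ⊆ G, V ∈ MulSeq θ (LargeStar θ j) (List.replicate d c) ∧
      SpacedFromBelow G V ∧ SpacedIn G V := by
  induction d generalizing G with
  | zero => exact exists_spaced_subset_of_mem_mulK hthin hc hG2 hG
  | succ d ih =>
    rw [mulSeq_replicate_succ] at hG
    obtain ⟨P, hP, hPG, hPP⟩ := hG
    choose V hVP hV hgap hsp using fun i => ih (fun w hw => hG2 w (hPG i hw)) (hP i)
    have hVG : univ.biUnion V ⊆ G := biUnion_subset.2 fun i _ => (hVP i).trans (hPG i)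
    refine ⟨univ.biUnion V, hVG, ?_, spacedFromBelow_biUnion hPG hgap,
      spacedIn_biUnion (fun i j h => (hPP i j h).1) hPG hVP hsp hgap⟩
    rw [mulSeq_replicate_succ]
    exact mulK_of_subset_blocks hPP hVP hV
      (fun i => nonempty_of_mem_mulSeq_largeStar (by omega) (hV i))
      fun i => subset_biUnion_of_mem V (mem_univ i)

end Thinning

lemma exists_spacedIn_subset_mem_largeStar (θ : ℕ → ℕ → ℕ → Prop) (j : ℕ) {A : Finset ℕ}
    (hA : A ∈ LargeStar θ (j + 1)) (hA2 : ∀ w ∈ A, 2 ≤ w) :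
    ∃ V ⊆ A, V ∈ LargeStar θ j ∧ SpacedIn A V := by
  induction j generalizing A with
  | zero =>
    refine ⟨{maxN A}, singleton_subset_iff.2 (maxN_mem hA.1), singleton_nonempty _, ?_⟩
    intro x hx y hy hxy
    rw [mem_singleton] at hx hy
    omega
  | succ j ih =>
    set c := minN A
    have hcA : ∀ w ∈ A.erase c, c < w := fun w hw =>
      (minN_le (mem_of_mem_erase hw)).lt_of_ne (ne_of_mem_erase hw).symm
    obtain ⟨V, hVA, hV, hgap, hsp⟩ := exists_spaced_subset_of_mem_mulSeq (fun _ => ih)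
      (hA2 _ (minN_mem hA.1)) (j + 1) (fun w hw => hA2 w (mem_of_mem_erase hw)) hA.2
    have hcV : c ∉ V := fun h => lt_irrefl c (hcA c (hVA h))
    have hmin : minN (insert c V) = c := minN_eq_of_forall_le (mem_insert_self c V) fun w hw =>
      (mem_insert.1 hw).elim ge_of_eq fun hw => (hcA w (hVA hw)).le
    refine ⟨insert c V, insert_subset (minN_mem hA.1) (hVA.trans (erase_subset _ _)),
      ⟨insert_nonempty c V, ?_⟩, (hsp.insert hgap hVA hcA).mono (erase_subset _ _)⟩
    rwa [hmin, erase_insert hcV]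

lemma OmegaSparse.succ_of_spacedIn {k : ℕ} {Z V : Finset ℕ} (hZ : OmegaSparse k Z)
    (hV : SpacedIn Z V) : OmegaSparse (k + 1) V :=
  fun x hx y hy hxy => Ioc_mem_largePlain_succ hZ (hV x hx y hy hxy)

lemma exists_omegaSparse_subset_mem_largeStar (θ : ℕ → ℕ → ℕ → Prop) (k n : ℕ) {Z : Finset ℕ}
    (hZ : Z ∈ LargeStar θ (n + k)) (hZ2 : ∀ w ∈ Z, 2 ≤ w) :
    ∃ Y ⊆ Z, Y ∈ LargeStar θ n ∧ OmegaSparse k Y := by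
  induction k generalizing n Z with
  | zero => exact ⟨Z, subset_rfl, hZ, fun x _ y _ hxy => ⟨y, mem_Ioc.2 ⟨hxy, le_rfl⟩⟩⟩
  | succ k ih =>
    rw [← add_assoc, add_right_comm] at hZ
    obtain ⟨Y, hYZ, hY, hYs⟩ := ih (n + 1) hZ hZ2
    obtain ⟨V, hVY, hV, hVs⟩ :=
      exists_spacedIn_subset_mem_largeStar θ n hY fun w hw => hZ2 w (hYZ hw)
    exact ⟨V, hVY.trans hYZ, hV, hYs.succ_of_spacedIn hVs⟩

/-- extraction of an ω^k-sparse large subset. -/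
theorem stmt_7 (θ : ℕ → ℕ → ℕ → Prop) (k n : ℕ) (X : Finset ℕ) (h3 : 3 ≤ minN X)
    (hX : X ∈ MulK θ (LargeStar θ (n + k)) 2) :
    ∃ Y ⊆ X, Y ∈ LargeStar θ n ∧ OmegaSparse k Y := by
  obtain ⟨W, hW, hWX, -⟩ := hX
  obtain ⟨Y, hYW, hY, hYs⟩ := exists_omegaSparse_subset_mem_largeStar θ k n (hW 0)
    fun w hw => (h3.trans (minN_le (hWX 0 hw))).trans' (by omega)
  exact ⟨Y, hYW.trans (hWX 0), hY, hYs⟩
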